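/- arXiv:1210.1684 — 3 statements merged into one kernel-verified Lean document; each statement's English description precedes it below -/
import Mathlib

section
/- Let g ≥ 1, let G be a Göpel group of order 2^r in V = 𝔽₂^g × 𝔽₂^g (0 ≤ r ≤ g), and set σ = g − r. Among the 2^{2g−r} cosets of G in V (the Göpel systems): exactly (2^{2σ} + 2^σ)/2 cosets consist only of even characteristics, exactly (2^{2σ} − 2^σ)/2 cosets consist only of odd characteristics, and each of the remaining 2^{2σ}(2^r − 1) cosets contains exactly 2^{r−1} even and 2^{r−1} odd characteristics. -/
open scoped BigOperators


open Finset Module LinearMap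

namespace GoepelAux


-- clean-context arithmetic helpers (omega must not see dirty hypotheses)
lemma L_PE {PE PO NE NO NEv NOv S T E1 Eg Eg1 : ℕ}
    (h1 : NEv = PE + NE) (h2 : NOv = PO + NO) (h3 : NE = NO) (h4 : PE + PO = S)
    (h5 : NEv = E1 + Eg1) (h6 : NEv + NOv = T) (h7 : T = 2 * E1) (h8 : Eg = 2 * Eg1) :
    2 * PE = S + Eg ∧ 2 * PO + Eg = S := by omega

lemma L_sub {a b t c : ℕ} (h1 : a + b = t) (h2 : b = c) : a + c = t := by omega

lemma L_div0 {Ec X Y : ℕ} (h : 2 * Ec = X + Y) : Ec = (X + Y) / 2 := by omega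

lemma L_div1 {Oc X Y : ℕ} (h : 2 * Oc + Y = X) : Oc = (X - Y) / 2 := by omega

lemma L3 {B NP Pc T S : ℕ} (e2 : B = NP) (e3 : Pc + NP = T) (e4 : Pc = S) :
    B + S = T := by omega

lemma L4 {A m0 m1 K : ℕ} (h1 : A = m0 + m1) (h2 : m0 = m1) (h3 : A = K) :
    m0 + m0 = K := by omega

lemma arith_half {A C D : ℕ} (h : A + A = C) (h2 : C = 2 * D) : A = D := by omega

lemma L_mixed {Mc S T K X : ℕ} (hK : 1 ≤ K) (h1 : Mc * K + S = T) (hT : T = S * K)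
    (hS : S = X * K) : Mc = X * (K - 1) := by
  obtain ⟨k', rfl⟩ : ∃ k', K = k' + 1 := ⟨K - 1, by omega⟩
  have h2 : Mc * (k' + 1) + S = S * k' + S := by
    rw [h1, hT]; ring
  have h3 : Mc * (k' + 1) = S * k' := Nat.add_right_cancel h2
  have h4 : S * k' = (X * k') * (k' + 1) := by rw [hS]; ring
  have h5 := Nat.eq_of_mul_eq_mul_right (Nat.succ_pos k') (h3.trans h4)
  simpa using h5

lemma pow2_sub_eq (g r : ℕ) (h : r ≤ g) : (2:ℕ) ^ (2 * g - r) = 2 ^ (2 * (g - r)) * 2 ^ r := by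
  rw [← pow_add]; congr 1; omega

lemma pow2_g_eq (g r : ℕ) (h : r ≤ g) : (2:ℕ) ^ g = 2 ^ (g - r) * 2 ^ r := by
  rw [← pow_add]; congr 1; omega

lemma pow2_T_eq (g r : ℕ) (h : r ≤ g) : (2:ℕ) ^ (2 * g) = 2 ^ (2 * g - r) * 2 ^ r := by
  rw [← pow_add]; congr 1; omega

lemma pow2_two (n : ℕ) (h : 1 ≤ n) : (2:ℕ) ^ n = 2 * 2 ^ (n - 1) := by
  conv_lhs => rw [show n = 1 + (n - 1) by omega]
  rw [pow_add, pow_one]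


lemma one_le_two_mul {g : ℕ} (h : 1 ≤ g) : 1 ≤ 2 * g := by omega


-- ZMod 2 facts
lemma z2cases : ∀ a : ZMod 2, a = 0 ∨ a = 1 := by decide
lemma z2ne : ∀ a : ZMod 2, ¬ a = 0 → a = 1 := by decide
lemma z2aa : ∀ a : ZMod 2, a + a = 0 := by decide
lemma z2abc : ∀ a b : ZMod 2, a + b = 0 → b = a := by decide

-- generic counting lemmas
lemma two_smul_zero {M : Type*} [AddCommGroup M] [Module (ZMod 2) M] (t : M) :
    t + t = 0 := by
  have h := two_smul (ZMod 2) t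
  rw [show ((2 : ZMod 2)) = 0 by decide, zero_smul] at h
  exact h.symm

lemma card_flip {M : Type*} [AddCommGroup M] [Module (ZMod 2) M] (t : M)
    (p0 p1 : M → Prop) (h01 : ∀ x, p0 x → p1 (x + t)) (h10 : ∀ x, p1 x → p0 (x + t)) :
    Nat.card {x // p0 x} = Nat.card {x // p1 x} := by
  apply Nat.card_congr
  refine ⟨fun x => ⟨x.1 + t, h01 x.1 x.2⟩, fun x => ⟨x.1 + t, h10 x.1 x.2⟩,
    fun x => ?_, fun x => ?_⟩ <;>
    · ext
      simp [add_assoc, two_smul_zero]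

lemma card_translate {M : Type*} [AddCommGroup M] (x₀ : M) (p : M → Prop) :
    Nat.card {x // p x} = Nat.card {y // p (x₀ + y)} :=
  Nat.card_congr (Equiv.subtypeEquiv (Equiv.addLeft x₀) (fun _ => Iff.rfl)).symm

lemma card_fiber_quot {R M : Type*} [Ring R] [AddCommGroup M] [Module R M]
    (G : Submodule R M) (c : M ⧸ G) :
    Nat.card {x : M // Submodule.Quotient.mk x = c} = Nat.card G := by
  obtain ⟨x₀, rfl⟩ := Submodule.Quotient.mk_surjective G c
  rw [card_translate x₀]
  apply Nat.card_congr
  refine ⟨fun y => ⟨y.1, ?_⟩, fun y => ⟨y.1, ?_⟩, fun y => rfl, fun y => rfl⟩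
  · have := (Submodule.Quotient.eq G).mp y.2
    simpa using this
  · rw [Submodule.Quotient.eq G]
    simpa using y.2

def sigmaFiber {α β : Type*} (f : α → β) (p : α → Prop) :
    {x // p x} ≃ Σ b : β, {x // f x = b ∧ p x} where
  toFun x := ⟨f x.1, ⟨x.1, rfl, x.2⟩⟩
  invFun y := ⟨y.2.1, y.2.2.2⟩
  left_inv x := rfl
  right_inv := by rintro ⟨b, ⟨x, rfl, hx⟩⟩; rfl

lemma card_fiberwise {α β : Type*} [Finite α] [Fintype β] (f : α → β) (p : α → Prop) :
    Nat.card {x // p x} = ∑ b : β, Nat.card {x // f x = b ∧ p x} := by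
  classical
  cases nonempty_fintype α
  rw [Nat.card_congr (sigmaFiber f p), Nat.card_eq_fintype_card, Fintype.card_sigma]
  exact Finset.sum_congr rfl fun b _ => (Nat.card_eq_fintype_card).symm

lemma card_comp_eq {α β : Type*} [Finite α] [Finite β] (f : α → β) (p0 p1 : α → Prop)
    (h : ∀ b : β, Nat.card {x // f x = b ∧ p0 x} = Nat.card {x // f x = b ∧ p1 x}) :
    Nat.card {x // p0 x} = Nat.card {x // p1 x} := by
  classical
  cases nonempty_fintype β
  rw [card_fiberwise f p0, card_fiberwise f p1]
  exact Finset.sum_congr rfl fun b _ => h b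

lemma card_comp {α β : Type*} [Finite α] [Finite β] (f : α → β) (p : β → Prop) (k : ℕ)
    (hk : ∀ b, p b → Nat.card {x // f x = b} = k) :
    Nat.card {x // p (f x)} = Nat.card {b // p b} * k := by
  classical
  cases nonempty_fintype β
  rw [card_fiberwise f (fun x => p (f x))]
  have step : ∀ b : β, Nat.card {x // f x = b ∧ p (f x)} = if p b then k else 0 := by
    intro b
    by_cases hb : p b
    · rw [if_pos hb, ← hk b hb]
      apply Nat.card_congr
      exact Equiv.subtypeEquivRight fun x => by
        constructor
        · exact fun h => h.1
        · exact fun h => ⟨h, by rw [h]; exact hb⟩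
    · rw [if_neg hb]
      have : IsEmpty {x // f x = b ∧ p (f x)} := by
        constructor; rintro ⟨x, rfl, hx⟩; exact hb hx
      exact Nat.card_of_isEmpty
  rw [Finset.sum_congr rfl fun b _ => step b]
  rw [← Finset.sum_filter]
  rw [Finset.sum_const, smul_eq_mul, Nat.card_eq_fintype_card, Fintype.card_subtype]

lemma card_split {α : Type*} [Finite α] (p : α → Prop) (f : α → ZMod 2) :
    Nat.card {x // p x} = Nat.card {x // p x ∧ f x = 0} + Nat.card {x // p x ∧ f x = 1} := by
  classical
  rw [← Nat.card_sum]
  apply Nat.card_congr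
  refine ⟨fun x => if h : f x.1 = 0 then Sum.inl ⟨x.1, x.2, h⟩ else Sum.inr ⟨x.1, x.2, z2ne _ h⟩,
    Sum.elim (fun x => ⟨x.1, x.2.1⟩) (fun x => ⟨x.1, x.2.1⟩), fun x => ?_, fun x => ?_⟩
  · by_cases h : f x.1 = 0 <;> simp [h]
  · rcases x with x | x
    · have h : f x.1 = 0 := x.2.2
      simp [h]
    · have h : ¬ f x.1 = 0 := by rw [x.2.2]; decide
      simp [h]

lemma card_split_pred {α : Type*} [Finite α] (s p : α → Prop) :
    Nat.card {x // s x} = Nat.card {x // p x ∧ s x} + Nat.card {x // ¬ p x ∧ s x} := by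
  classical
  rw [← Nat.card_sum]
  apply Nat.card_congr
  refine ⟨fun x => if h : p x.1 then Sum.inl ⟨x.1, h, x.2⟩ else Sum.inr ⟨x.1, h, x.2⟩,
    Sum.elim (fun x => ⟨x.1, x.2.2⟩) (fun x => ⟨x.1, x.2.2⟩), fun x => ?_, fun x => ?_⟩
  · by_cases h : p x.1 <;> simp [h]
  · rcases x with x | x
    · simp [x.2.1]
    · simp [x.2.1]

lemma card_compl {α : Type*} [Finite α] (p : α → Prop) :
    Nat.card {x // p x} + Nat.card {x // ¬ p x} = Nat.card α := by
  classical
  cases nonempty_fintype α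
  rw [Nat.card_eq_fintype_card, Nat.card_eq_fintype_card, Nat.card_eq_fintype_card,
    Fintype.card_subtype, Fintype.card_subtype]
  simpa using Finset.card_filter_add_card_filter_not (s := univ) (p := p)



variable {g : ℕ}

abbrev V (g : ℕ) := (Fin g → ZMod 2) × (Fin g → ZMod 2)

def q (x : V g) : ZMod 2 := ∑ i, x.1 i * x.2 i
def B (x y : V g) : ZMod 2 := (∑ i, x.1 i * y.2 i) + (∑ i, x.2 i * y.1 i)


lemma B_symm (x y : V g) : B x y = B y x := by
  simp [B, mul_comm, add_comm]

lemma B_add_left (x x' y : V g) : B (x + x') y = B x y + B x' y := by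
  simp [B, add_mul, Finset.sum_add_distrib]; ring

lemma B_add_right (x y y' : V g) : B x (y + y') = B x y + B x y' := by
  rw [B_symm, B_add_left, B_symm y x, B_symm y' x]

lemma B_smul_left (c : ZMod 2) (x y : V g) : B (c • x) y = c * B x y := by
  simp [B, Finset.mul_sum, mul_add, mul_assoc]

lemma B_smul_right (c : ZMod 2) (x y : V g) : B x (c • y) = c * B x y := by
  rw [B_symm, B_smul_left, B_symm]

lemma B_zero_right (x : V g) : B x 0 = 0 := by simp [B]

lemma q_zero : q (0 : V g) = 0 := by simp [q]

lemma q_add (x y : V g) : q (x + y) = q x + q y + B x y := by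
  simp only [q, B, Prod.fst_add, Prod.snd_add, Pi.add_apply, add_mul, mul_add,
    Finset.sum_add_distrib]
  simp only [mul_comm]
  ring

lemma B_eq_zero (x : V g) (h : ∀ y : V g, B x y = 0) : x = 0 := by
  have h1 : ∀ j, x.1 j = 0 := by
    intro j
    have := h (0, Pi.single j 1)
    simpa [B, Pi.single_apply, mul_ite, Finset.sum_ite_eq'] using this
  have h2 : ∀ j, x.2 j = 0 := by
    intro j
    have := h (Pi.single j 1, 0)
    simpa [B, Pi.single_apply, mul_ite, Finset.sum_ite_eq'] using this
  ext j
  · exact h1 j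
  · exact h2 j

noncomputable def Bl (g : ℕ) : V g →ₗ[ZMod 2] Module.Dual (ZMod 2) (V g) :=
  LinearMap.mk₂ (ZMod 2) B B_add_left B_smul_left B_add_right B_smul_right

@[simp] lemma Bl_apply (x y : V g) : Bl g x y = B x y := rfl

lemma finrank_V : finrank (ZMod 2) (V g) = 2 * g := by
  have : finrank (ZMod 2) ((Fin g → ZMod 2) × (Fin g → ZMod 2)) = 2 * g := by
    rw [Module.finrank_prod, Module.finrank_pi]
    simp [two_mul]
  exact this

lemma Bl_inj (g : ℕ) : Function.Injective (Bl g) := by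
  refine LinearMap.ker_eq_bot.mp (LinearMap.ker_eq_bot'.mpr fun x hx => ?_)
  exact B_eq_zero x fun y => by simpa using LinearMap.congr_fun hx y

lemma Bl_surj (g : ℕ) : Function.Surjective (Bl g) :=
  (LinearMap.injective_iff_surjective_of_finrank_eq_finrank
    Subspace.dual_finrank_eq.symm).mp (Bl_inj g)

noncomputable def rho (G : Submodule (ZMod 2) (V g)) :
    V g →ₗ[ZMod 2] Module.Dual (ZMod 2) G :=
  (G.subtype.dualMap).comp (Bl g)

lemma rho_apply (G : Submodule (ZMod 2) (V g)) (x : V g) (y : G) :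
    rho G x y = B x y.val := rfl

lemma rho_surj (G : Submodule (ZMod 2) (V g)) : Function.Surjective (rho G) :=
  (LinearMap.dualMap_surjective_of_injective G.injective_subtype).comp (Bl_surj g)

lemma finrank_ker_rho {r : ℕ} (G : Submodule (ZMod 2) (V g))
    (hrank : finrank (ZMod 2) G = r) :
    finrank (ZMod 2) (LinearMap.ker (rho G)) = 2 * g - r := by
  have h1 := LinearMap.finrank_range_add_finrank_ker (rho G)
  rw [LinearMap.range_eq_top.mpr (rho_surj G), finrank_top] at h1
  rw [Subspace.dual_finrank_eq, hrank, finrank_V] at h1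
  omega

lemma card_mod (M : Type*) [AddCommGroup M] [Module (ZMod 2) M] [Finite M] :
    Nat.card M = 2 ^ Module.finrank (ZMod 2) M := by
  cases nonempty_fintype M
  rw [Nat.card_eq_fintype_card, card_eq_pow_finrank (K := ZMod 2), ZMod.card]

section WithG

variable (G : Submodule (ZMod 2) (V g))

/-- The parity function is linear on an isotropic subspace. -/
noncomputable def qlin (hB : ∀ x ∈ G, ∀ y ∈ G, B x y = 0) : Module.Dual (ZMod 2) G where
  toFun y := q (y : V g)
  map_add' y y' := by
    show q ((y + y' : G) : V g) = q (y : V g) + q (y' : V g)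
    have h : ((y + y' : G) : V g) = (y : V g) + (y' : V g) := rfl
    rw [h, q_add, hB _ y.2 _ y'.2, add_zero]
  map_smul' c y := by
    rcases z2cases c with rfl | rfl
    · have h : ((0 : ZMod 2) • y : G) = (0 : G) := by rw [zero_smul]
      rw [h]
      simp [q_zero]
    · simp

/-- "Pure" characteristic: the coset of `x` has constant parity. -/
def Pp (x : V g) : Prop := ∀ y ∈ G, B x y = q y

lemma Pp_iff_rho (hB : ∀ x ∈ G, ∀ y ∈ G, B x y = 0) (x : V g) :
    Pp G x ↔ rho G x = qlin G hB := by
  constructor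
  · intro h
    ext y
    exact h y.1 y.2
  · intro h y hy
    exact LinearMap.congr_fun h ⟨y, hy⟩

lemma q_const_of_Pp {x : V g} (hP : Pp G x) {z : V g}
    (h : (Submodule.Quotient.mk z : V g ⧸ G) = Submodule.Quotient.mk x) : q z = q x := by
  set y := z - x with hy_def
  have hyG : y ∈ G := (Submodule.Quotient.eq G).mp h
  have hz : z = x + y := by rw [hy_def]; abel
  rw [hz, q_add, hP y hyG, add_assoc, z2aa, add_zero]

lemma Pp_invariant (hB : ∀ x ∈ G, ∀ y ∈ G, B x y = 0) {x y : V g} (hy : y ∈ G) (hP : Pp G x) : Pp G (x + y) := by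
  intro w hw
  rw [B_add_left, hP w hw, hB y hy w hw, add_zero]

lemma Pp_invariant_coset (hB' : ∀ x ∈ G, ∀ y ∈ G, B x y = 0) {x z : V g} (hP : Pp G x)
    (h : (Submodule.Quotient.mk z : V g ⧸ G) = Submodule.Quotient.mk x) : Pp G z := by
  have hyG : z - x ∈ G := (Submodule.Quotient.eq G).mp h
  have hz : z = x + (z - x) := by abel
  rw [hz]
  exact Pp_invariant G hB' hyG hP

/-- Characterization of all-even cosets. -/
lemma even_coset_iff (x : V g) :
    (∀ z : V g, (Submodule.Quotient.mk z : V g ⧸ G) = Submodule.Quotient.mk x → q z = 0)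
      ↔ (Pp G x ∧ q x = 0) := by
  constructor
  · intro h
    have hx : q x = 0 := h x rfl
    refine ⟨fun y hy => ?_, hx⟩
    have hmk : (Submodule.Quotient.mk (x + y) : V g ⧸ G) = Submodule.Quotient.mk x := by
      rw [Submodule.Quotient.mk_add, (Submodule.Quotient.mk_eq_zero G).mpr hy, add_zero]
    have := h (x + y) hmk
    rw [q_add, hx, zero_add] at this
    exact (z2abc _ _ this)
  · rintro ⟨hP, hx⟩
    intro z hz
    rw [q_const_of_Pp G hP hz, hx]

/-- Characterization of all-odd cosets. -/
lemma odd_coset_iff (x : V g) :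
    (∀ z : V g, (Submodule.Quotient.mk z : V g ⧸ G) = Submodule.Quotient.mk x → q z = 1)
      ↔ (Pp G x ∧ q x = 1) := by
  constructor
  · intro h
    have hx : q x = 1 := h x rfl
    refine ⟨fun y hy => ?_, hx⟩
    have hmk : (Submodule.Quotient.mk (x + y) : V g ⧸ G) = Submodule.Quotient.mk x := by
      rw [Submodule.Quotient.mk_add, (Submodule.Quotient.mk_eq_zero G).mpr hy, add_zero]
    have h2 := h (x + y) hmk
    rw [q_add, hx] at h2
    have h3 : q y + B x y = 0 := by
      have := z2cases (q y + B x y)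
      rcases this with h4 | h4
      · exact h4
      · rw [add_assoc, h4] at h2
        exact absurd h2 (by decide)
    exact z2abc _ _ h3
  · rintro ⟨hP, hx⟩
    intro z hz
    rw [q_const_of_Pp G hP hz, hx]

/-- Characterization of mixed cosets. -/
lemma mixed_coset_iff (x : V g) :
    ((∃ z : V g, (Submodule.Quotient.mk z : V g ⧸ G) = Submodule.Quotient.mk x ∧ q z = 0) ∧
     (∃ z : V g, (Submodule.Quotient.mk z : V g ⧸ G) = Submodule.Quotient.mk x ∧ q z = 1))
      ↔ ¬ Pp G x := by
  constructor
  · rintro ⟨⟨z0, hz0, hq0⟩, ⟨z1, hz1, hq1⟩⟩ hP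
    rw [q_const_of_Pp G hP hz0] at hq0
    rw [q_const_of_Pp G hP hz1] at hq1
    rw [hq0] at hq1
    exact absurd hq1 (by decide)
  · intro hP
    rw [Pp] at hP
    push_neg at hP
    obtain ⟨y, hy, hBy⟩ := hP
    have hflip : q (x + y) = q x + 1 := by
      rw [q_add, add_assoc]
      congr 1
      revert hBy
      generalize q y = a
      generalize B x y = b
      revert a b
      decide
    have hmk : (Submodule.Quotient.mk (x + y) : V g ⧸ G) = Submodule.Quotient.mk x := by
      rw [Submodule.Quotient.mk_add, (Submodule.Quotient.mk_eq_zero G).mpr hy, add_zero]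
    rcases z2cases (q x) with hx | hx
    · refine ⟨⟨x, rfl, hx⟩, ⟨x + y, hmk, ?_⟩⟩
      rw [hflip, hx, zero_add]
    · refine ⟨⟨x + y, hmk, ?_⟩, ⟨x, rfl, hx⟩⟩
      rw [hflip, hx]
      decide

end WithG


lemma mixed_fiber_card {g : ℕ} (G : Submodule (ZMod 2) (V g))
    (hB : ∀ x ∈ G, ∀ y ∈ G, B x y = 0) (c : V g ⧸ G) {u w : V g}
    (hu : Submodule.Quotient.mk u = c) (hw : Submodule.Quotient.mk w = c)
    (h0 : q u = 0) (h1 : q w = 1) :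
    Nat.card {x : V g // Submodule.Quotient.mk x = c ∧ q x = 0}
      = Nat.card {x : V g // Submodule.Quotient.mk x = c ∧ q x = 1} := by
  set t := w - u with ht_def
  have htG : t ∈ G := (Submodule.Quotient.eq G).mp (hw.trans hu.symm)
  have hwt : w = u + t := by rw [ht_def]; abel
  have hqt : q t + B u t = 1 := by
    have h2 : q w = q u + (q t + B u t) := by rw [hwt, q_add, add_assoc]
    rw [h1, h0, zero_add] at h2
    exact h2.symm
  have key : ∀ x : V g, Submodule.Quotient.mk x = c → q (x + t) = q x + 1 := by
    intro x hx
    set d := x - u with hd_def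
    have hdG : d ∈ G := (Submodule.Quotient.eq G).mp (hx.trans hu.symm)
    have hxu : x = u + d := by rw [hd_def]; abel
    have hBx : B x t = B u t := by rw [hxu, B_add_left, hB d hdG t htG, add_zero]
    rw [q_add, add_assoc, hBx, hqt]
  have hmk : ∀ x : V g, Submodule.Quotient.mk x = c →
      (Submodule.Quotient.mk (x + t) : V g ⧸ G) = c := by
    intro x hx
    rw [Submodule.Quotient.mk_add, hx, (Submodule.Quotient.mk_eq_zero G).mpr htG, add_zero]
  apply card_flip t
  · rintro x ⟨hx, hq⟩
    exact ⟨hmk x hx, by rw [key x hx, hq, zero_add]⟩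
  · rintro x ⟨hx, hq⟩
    refine ⟨hmk x hx, ?_⟩
    rw [key x hx, hq]
    decide

lemma card_even_V (g : ℕ) (hg : 1 ≤ g) :
    Nat.card {x : V g // q x = 0} = 2 ^ (2 * g - 1) + 2 ^ (g - 1) := by
  classical
  have hcard : Nat.card (Fin g → ZMod 2) = 2 ^ g := by
    rw [card_mod, Module.finrank_pi, Fintype.card_fin]
  have h2g : (2:ℕ) ^ g = 2 * 2 ^ (g - 1) := by
    conv_lhs => rw [show g = 1 + (g - 1) by omega]
    rw [pow_add, pow_one]
  rw [card_fiberwise (f := Prod.fst) (fun x : V g => q x = 0)]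
  have step : ∀ a : Fin g → ZMod 2,
      Nat.card {x : V g // x.1 = a ∧ q x = 0} = if a = 0 then 2 ^ g else 2 ^ (g - 1) := by
    intro a
    have e : {x : V g // x.1 = a ∧ q x = 0} ≃ {b : Fin g → ZMod 2 // (∑ i, a i * b i) = 0} :=
      { toFun := fun x => ⟨x.1.2, by obtain ⟨⟨x1, x2⟩, h1, h2⟩ := x; subst h1; exact h2⟩
        invFun := fun b => ⟨(a, b.1), rfl, b.2⟩
        left_inv := fun x => Subtype.ext (Prod.ext x.2.1.symm rfl)
        right_inv := fun b => rfl }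
    rw [Nat.card_congr e]
    by_cases ha : a = 0
    · rw [if_pos ha]
      have hall : ∀ b : Fin g → ZMod 2, (∑ i, a i * b i) = 0 := by
        intro b; subst ha; simp
      rw [Nat.card_congr (Equiv.subtypeUnivEquiv hall), hcard]
    · rw [if_neg ha]
      obtain ⟨j, hj⟩ := Function.ne_iff.mp ha
      have haj : a j = 1 := z2ne _ (by simpa using hj)
      have hadd : ∀ b b' : Fin g → ZMod 2,
          (∑ i, a i * (b + b') i) = (∑ i, a i * b i) + (∑ i, a i * b' i) := by
        intro b b'
        simp [mul_add, Finset.sum_add_distrib]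
      have hat : (∑ i, a i * Pi.single (M := fun _ : Fin g => ZMod 2) j 1 i) = 1 := by
        simpa [Pi.single_apply, mul_ite, Finset.sum_ite_eq'] using haj
      have hflip : Nat.card {b : Fin g → ZMod 2 // (∑ i, a i * b i) = 0}
          = Nat.card {b : Fin g → ZMod 2 // (∑ i, a i * b i) = 1} := by
        apply card_flip (Pi.single (M := fun _ : Fin g => ZMod 2) j 1)
        · intro b hb
          rw [hadd, hb, hat, zero_add]
        · intro b hb
          rw [hadd, hb, hat]
          decide
      have hcompl := card_compl (fun b : Fin g → ZMod 2 => (∑ i, a i * b i) = 0)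
      have ene : ∀ b : Fin g → ZMod 2, (¬ (∑ i, a i * b i) = 0) ↔ ((∑ i, a i * b i) = 1) :=
        fun b => ⟨z2ne _, fun h => by rw [h]; decide⟩
      have h1' : Nat.card {b : Fin g → ZMod 2 // ¬ (∑ i, a i * b i) = 0}
          = Nat.card {b : Fin g → ZMod 2 // (∑ i, a i * b i) = 1} :=
        Nat.card_congr (Equiv.subtypeEquivRight ene)
      beta_reduce at hcompl
      rw [hcard, h1', ← hflip] at hcompl
      exact arith_half hcompl h2g
  rw [Finset.sum_congr rfl (fun a _ => step a), Finset.sum_ite, Finset.sum_const,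
    Finset.sum_const, smul_eq_mul, smul_eq_mul]
  have hf1 : (Finset.univ.filter (fun a : Fin g → ZMod 2 => a = 0)).card = 1 := by
    rw [Finset.filter_eq' Finset.univ (0 : Fin g → ZMod 2), if_pos (Finset.mem_univ _)]
    exact Finset.card_singleton _
  have hf2 : (Finset.univ.filter (fun a : Fin g → ZMod 2 => ¬ a = 0)).card = 2 ^ g - 1 := by
    have : (Finset.univ.filter (fun a : Fin g → ZMod 2 => ¬ a = 0)) = Finset.univ.erase 0 := by
      ext a
      simp [Finset.mem_erase, and_comm]
    rw [this, Finset.card_erase_of_mem (Finset.mem_univ _), Finset.card_univ,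
      ← Nat.card_eq_fintype_card, hcard]
  rw [hf1, hf2, one_mul]
  have hmul : (2:ℕ) ^ g * 2 ^ (g - 1) = 2 ^ (2 * g - 1) := by
    rw [← pow_add]
    congr 1
    omega
  rw [Nat.sub_mul, one_mul, hmul]
  have hCB : (2:ℕ) ^ (g - 1) ≤ 2 ^ (2 * g - 1) := Nat.pow_le_pow_right (by norm_num) (by omega)
  omega

end GoepelAux

open GoepelAux

/-- let `G` be a Göpel group of order `2^r` in `V = 𝔽₂^g × 𝔽₂^g`
(an `r`-dimensional totally isotropic subspace for the symplectic pairing) and set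
`σ = g − r`. Among the `2^{2g−r}` cosets of `G` in `V` (the Göpel systems), exactly
`(2^{2σ}+2^σ)/2` consist only of even characteristics, exactly `(2^{2σ}−2^σ)/2`
consist only of odd characteristics; there are `2^{2σ}(2^r−1)` remaining (mixed)
cosets, and each of them contains exactly `2^{r−1}` even and `2^{r−1}` odd
characteristics. -/
theorem goepel_systems_parity_count (g r : ℕ) (hg : 1 ≤ g) (hrg : r ≤ g)
    (G : Submodule (ZMod 2) ((Fin g → ZMod 2) × (Fin g → ZMod 2)))
    (hrank : Module.finrank (ZMod 2) G = r)
    (hisot : ∀ x ∈ G, ∀ y ∈ G,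
      (∑ i, x.1 i * y.2 i) + (∑ i, x.2 i * y.1 i) = 0) :
    Nat.card {c : ((Fin g → ZMod 2) × (Fin g → ZMod 2)) ⧸ G //
        ∀ x : (Fin g → ZMod 2) × (Fin g → ZMod 2),
          Submodule.Quotient.mk x = c → ∑ i, x.1 i * x.2 i = 0} =
      (2 ^ (2 * (g - r)) + 2 ^ (g - r)) / 2 ∧
    Nat.card {c : ((Fin g → ZMod 2) × (Fin g → ZMod 2)) ⧸ G //
        ∀ x : (Fin g → ZMod 2) × (Fin g → ZMod 2),
          Submodule.Quotient.mk x = c → ∑ i, x.1 i * x.2 i = 1} =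
      (2 ^ (2 * (g - r)) - 2 ^ (g - r)) / 2 ∧
    Nat.card {c : ((Fin g → ZMod 2) × (Fin g → ZMod 2)) ⧸ G //
        (∃ x : (Fin g → ZMod 2) × (Fin g → ZMod 2),
          Submodule.Quotient.mk x = c ∧ ∑ i, x.1 i * x.2 i = 0) ∧
        (∃ x : (Fin g → ZMod 2) × (Fin g → ZMod 2),
          Submodule.Quotient.mk x = c ∧ ∑ i, x.1 i * x.2 i = 1)} =
      2 ^ (2 * (g - r)) * (2 ^ r - 1) ∧
    ∀ c : ((Fin g → ZMod 2) × (Fin g → ZMod 2)) ⧸ G,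
      (∃ x : (Fin g → ZMod 2) × (Fin g → ZMod 2),
        Submodule.Quotient.mk x = c ∧ ∑ i, x.1 i * x.2 i = 0) →
      (∃ x : (Fin g → ZMod 2) × (Fin g → ZMod 2),
        Submodule.Quotient.mk x = c ∧ ∑ i, x.1 i * x.2 i = 1) →
      Nat.card {x : (Fin g → ZMod 2) × (Fin g → ZMod 2) //
          Submodule.Quotient.mk x = c ∧ ∑ i, x.1 i * x.2 i = 0} = 2 ^ (r - 1) ∧
      Nat.card {x : (Fin g → ZMod 2) × (Fin g → ZMod 2) //
          Submodule.Quotient.mk x = c ∧ ∑ i, x.1 i * x.2 i = 1} = 2 ^ (r - 1) := by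
  classical
  have hB : ∀ x ∈ G, ∀ y ∈ G, B x y = 0 := hisot
  letI : Finite (V g ⧸ G) := Finite.of_surjective _ (Submodule.Quotient.mk_surjective G)
  have hKpos : 0 < 2 ^ r := pow_pos (by norm_num) r
  -- basic cardinalities
  have hcardG : Nat.card G = 2 ^ r := by rw [card_mod, hrank]
  have hfib : ∀ c : V g ⧸ G, Nat.card {x : V g // Submodule.Quotient.mk x = c} = 2 ^ r :=
    fun c => by rw [card_fiber_quot, hcardG]
  have hcardV : Nat.card (V g) = 2 ^ (2 * g) := by rw [card_mod, finrank_V]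
  -- pure points count
  have hP : Nat.card {x : V g // Pp G x} = 2 ^ (2 * g - r) := by
    obtain ⟨x₀, hx₀⟩ := rho_surj G (qlin G hB)
    rw [Nat.card_congr (Equiv.subtypeEquivRight (Pp_iff_rho G hB))]
    rw [card_translate x₀]
    have e2 : ∀ y : V g, (rho G (x₀ + y) = qlin G hB) ↔ y ∈ LinearMap.ker (rho G) := by
      intro y
      rw [map_add, hx₀, add_eq_left, LinearMap.mem_ker]
    rw [Nat.card_congr (Equiv.subtypeEquivRight e2)]
    have : Nat.card (LinearMap.ker (rho G)) = 2 ^ (2 * g - r) := by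
      rw [card_mod, finrank_ker_rho G hrank]
    exact this
  -- complement of pure points
  have hcompl2 := card_compl (fun x : V g => Pp G x)
  -- split pure points by parity
  have hsplitP := card_split (fun x : V g => Pp G x) q
  -- split even/odd points by purity
  have hqsplit0 := card_split_pred (fun x : V g => q x = 0) (Pp G)
  have hqsplit1 := card_split_pred (fun x : V g => q x = 1) (Pp G)
  -- global even count
  have hNEv : Nat.card {x : V g // q x = 0} = 2 ^ (2 * g - 1) + 2 ^ (g - 1) := card_even_V g hg
  -- total count split by parity
  have hcomplq := card_compl (fun x : V g => q x = 0)
  have hq01 : Nat.card {x : V g // ¬ q x = 0} = Nat.card {x : V g // q x = 1} :=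
    Nat.card_congr (Equiv.subtypeEquivRight fun x => ⟨z2ne _, fun h => by rw [h]; decide⟩)
  have htotq : Nat.card {x : V g // q x = 0} + Nat.card {x : V g // q x = 1} = Nat.card (V g) :=
    L_sub hcomplq hq01
  -- balance on mixed cosets
  have hbal : Nat.card {x : V g // ¬ Pp G x ∧ q x = 0}
      = Nat.card {x : V g // ¬ Pp G x ∧ q x = 1} := by
    apply card_comp_eq (f := fun x : V g => (Submodule.Quotient.mk x : V g ⧸ G))
    intro c
    by_cases hc : ∃ x₀ : V g, Submodule.Quotient.mk x₀ = c ∧ Pp G x₀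
    · obtain ⟨x₀, hx₀, hPx₀⟩ := hc
      have hemp : ∀ x : V g, Submodule.Quotient.mk x = c → Pp G x := fun x hx =>
        Pp_invariant_coset G hB hPx₀ (by rw [hx, hx₀])
      have i0 : IsEmpty {x : V g // Submodule.Quotient.mk x = c ∧ (¬ Pp G x ∧ q x = 0)} :=
        ⟨fun x => x.2.2.1 (hemp _ x.2.1)⟩
      have i1 : IsEmpty {x : V g // Submodule.Quotient.mk x = c ∧ (¬ Pp G x ∧ q x = 1)} :=
        ⟨fun x => x.2.2.1 (hemp _ x.2.1)⟩
      rw [Nat.card_of_isEmpty (α := {x : V g // Submodule.Quotient.mk x = c ∧ (¬ Pp G x ∧ q x = 0)}),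
        Nat.card_of_isEmpty (α := {x : V g // Submodule.Quotient.mk x = c ∧ (¬ Pp G x ∧ q x = 1)})]
    · push_neg at hc
      obtain ⟨x₀, hx₀⟩ := Submodule.Quotient.mk_surjective G c
      have hnp : ¬ Pp G x₀ := hc x₀ hx₀
      obtain ⟨⟨u, hu, hqu⟩, ⟨w, hw, hqw⟩⟩ := (mixed_coset_iff G x₀).mpr hnp
      have e0 : ∀ x : V g, (Submodule.Quotient.mk x = c ∧ (¬ Pp G x ∧ q x = 0))
          ↔ (Submodule.Quotient.mk x = c ∧ q x = 0) := fun x =>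
        ⟨fun h => ⟨h.1, h.2.2⟩, fun h => ⟨h.1, hc x h.1, h.2⟩⟩
      have e1 : ∀ x : V g, (Submodule.Quotient.mk x = c ∧ (¬ Pp G x ∧ q x = 1))
          ↔ (Submodule.Quotient.mk x = c ∧ q x = 1) := fun x =>
        ⟨fun h => ⟨h.1, h.2.2⟩, fun h => ⟨h.1, hc x h.1, h.2⟩⟩
      rw [Nat.card_congr (Equiv.subtypeEquivRight e0), Nat.card_congr (Equiv.subtypeEquivRight e1)]
      exact mixed_fiber_card G hB c (by rw [hu, hx₀]) (by rw [hw, hx₀]) hqu hqw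
  -- key parity counts among pure points
  have hA1 := L_PE hqsplit0 hqsplit1 hbal (hsplitP.symm.trans hP) hNEv (htotq.trans hcardV)
    (pow2_two (2 * g) (one_le_two_mul hg)) (pow2_two g hg)
  -- even cosets
  have hEcomp := card_comp (β := V g ⧸ G)
    (f := fun x : V g => (Submodule.Quotient.mk x : V g ⧸ G))
    (p := fun c => ∀ z : V g, Submodule.Quotient.mk z = c → q z = 0) (2 ^ r)
    (fun b _ => hfib b)
  have hEeq : Nat.card {x : V g // ∀ z : V g, Submodule.Quotient.mk z = Submodule.Quotient.mk x → q z = 0}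
      = Nat.card {x : V g // Pp G x ∧ q x = 0} :=
    Nat.card_congr (Equiv.subtypeEquivRight (fun x => even_coset_iff G x))
  have hEPE : Nat.card {c : V g ⧸ G // ∀ z : V g, Submodule.Quotient.mk z = c → q z = 0} * 2 ^ r
      = Nat.card {x : V g // Pp G x ∧ q x = 0} := hEcomp.symm.trans hEeq
  have hEcalc : (2 * Nat.card {c : V g ⧸ G // ∀ z : V g, Submodule.Quotient.mk z = c → q z = 0}) * 2 ^ r
      = (2 ^ (2 * (g - r)) + 2 ^ (g - r)) * 2 ^ r := by
    calc (2 * Nat.card {c : V g ⧸ G // ∀ z : V g, Submodule.Quotient.mk z = c → q z = 0}) * 2 ^ r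
        = 2 * (Nat.card {c : V g ⧸ G // ∀ z : V g, Submodule.Quotient.mk z = c → q z = 0} * 2 ^ r) := by
          ring
      _ = 2 * Nat.card {x : V g // Pp G x ∧ q x = 0} := by rw [hEPE]
      _ = 2 ^ (2 * g - r) + 2 ^ g := hA1.1
      _ = 2 ^ (2 * (g - r)) * 2 ^ r + 2 ^ (g - r) * 2 ^ r := by
          rw [pow2_sub_eq g r hrg, pow2_g_eq g r hrg]
      _ = (2 ^ (2 * (g - r)) + 2 ^ (g - r)) * 2 ^ r := by ring
  have hEc := L_div0 (Nat.eq_of_mul_eq_mul_right hKpos hEcalc)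
  -- odd cosets
  have hOcomp := card_comp (β := V g ⧸ G)
    (f := fun x : V g => (Submodule.Quotient.mk x : V g ⧸ G))
    (p := fun c => ∀ z : V g, Submodule.Quotient.mk z = c → q z = 1) (2 ^ r)
    (fun b _ => hfib b)
  have hOeq : Nat.card {x : V g // ∀ z : V g, Submodule.Quotient.mk z = Submodule.Quotient.mk x → q z = 1}
      = Nat.card {x : V g // Pp G x ∧ q x = 1} :=
    Nat.card_congr (Equiv.subtypeEquivRight (fun x => odd_coset_iff G x))
  have hOPE : Nat.card {c : V g ⧸ G // ∀ z : V g, Submodule.Quotient.mk z = c → q z = 1} * 2 ^ r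
      = Nat.card {x : V g // Pp G x ∧ q x = 1} := hOcomp.symm.trans hOeq
  have hOcalc : (2 * Nat.card {c : V g ⧸ G // ∀ z : V g, Submodule.Quotient.mk z = c → q z = 1}
        + 2 ^ (g - r)) * 2 ^ r
      = 2 ^ (2 * (g - r)) * 2 ^ r := by
    calc (2 * Nat.card {c : V g ⧸ G // ∀ z : V g, Submodule.Quotient.mk z = c → q z = 1}
          + 2 ^ (g - r)) * 2 ^ r
        = 2 * (Nat.card {c : V g ⧸ G // ∀ z : V g, Submodule.Quotient.mk z = c → q z = 1} * 2 ^ r)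
          + 2 ^ (g - r) * 2 ^ r := by ring
      _ = 2 * Nat.card {x : V g // Pp G x ∧ q x = 1} + 2 ^ g := by
          rw [hOPE, ← pow2_g_eq g r hrg]
      _ = 2 ^ (2 * g - r) := hA1.2
      _ = 2 ^ (2 * (g - r)) * 2 ^ r := pow2_sub_eq g r hrg
  have hOc := L_div1 (Nat.eq_of_mul_eq_mul_right hKpos hOcalc)
  -- mixed cosets
  have hMcomp := card_comp (β := V g ⧸ G)
    (f := fun x : V g => (Submodule.Quotient.mk x : V g ⧸ G))
    (p := fun c => (∃ z : V g, Submodule.Quotient.mk z = c ∧ q z = 0)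
      ∧ (∃ z : V g, Submodule.Quotient.mk z = c ∧ q z = 1)) (2 ^ r)
    (fun b _ => hfib b)
  have hMeq : Nat.card {x : V g //
        (∃ z : V g, Submodule.Quotient.mk z = Submodule.Quotient.mk x ∧ q z = 0)
        ∧ (∃ z : V g, Submodule.Quotient.mk z = Submodule.Quotient.mk x ∧ q z = 1)}
      = Nat.card {x : V g // ¬ Pp G x} :=
    Nat.card_congr (Equiv.subtypeEquivRight (fun x => mixed_coset_iff G x))
  have hMPE : Nat.card {c : V g ⧸ G // (∃ z : V g, Submodule.Quotient.mk z = c ∧ q z = 0)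
        ∧ (∃ z : V g, Submodule.Quotient.mk z = c ∧ q z = 1)} * 2 ^ r
      = Nat.card {x : V g // ¬ Pp G x} := hMcomp.symm.trans hMeq
  have hMc : Nat.card {c : V g ⧸ G // (∃ z : V g, Submodule.Quotient.mk z = c ∧ q z = 0)
        ∧ (∃ z : V g, Submodule.Quotient.mk z = c ∧ q z = 1)}
      = 2 ^ (2 * (g - r)) * (2 ^ r - 1) := by
    have h1 := L3 hMPE hcompl2 hP
    rw [hcardV] at h1
    exact L_mixed (Nat.one_le_two_pow) h1 (pow2_T_eq g r hrg) (pow2_sub_eq g r hrg)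
  refine ⟨hEc, hOc, hMc, ?_⟩
  -- part 4
  intro c hex0 hex1
  obtain ⟨u, hu, hqu⟩ := hex0
  obtain ⟨w, hw, hqw⟩ := hex1
  have hqu' : q u = 0 := hqu
  have hqw' : q w = 1 := hqw
  have hm : Nat.card {x : V g // Submodule.Quotient.mk x = c ∧ q x = 0}
      = Nat.card {x : V g // Submodule.Quotient.mk x = c ∧ q x = 1} :=
    mixed_fiber_card G hB c hu hw hqu' hqw'
  have hsum := card_split (fun x : V g => Submodule.Quotient.mk x = c) q
  have hr1 : 1 ≤ r := by
    rcases Nat.eq_zero_or_pos r with hr0 | h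
    · exfalso
      have hG0 : G = ⊥ := Submodule.finrank_eq_zero.mp (by rw [hrank, hr0])
      have htG : w - u ∈ G := (Submodule.Quotient.eq G).mp (hw.trans hu.symm)
      rw [hG0, Submodule.mem_bot] at htG
      have hwu : w = u := by
        have := sub_eq_zero.mp htG
        exact this
      rw [hwu] at hqw'
      exact absurd (hqu'.symm.trans hqw') (by decide)
    · exact h
  have hdouble := L4 hsum hm (hfib c)
  have h0 : Nat.card {x : V g // Submodule.Quotient.mk x = c ∧ q x = 0} = 2 ^ (r - 1) :=
    arith_half hdouble (pow2_two r hr1)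
  exact ⟨h0, hm.symm.trans h0⟩
end

section
/- Let g ≥ 1 and let G be a Göpel group of order 2^g in V = 𝔽₂^g × 𝔽₂^g (i.e. r = g, a maximal totally isotropic subspace). Then exactly one coset of G in V consists only of even characteristics, and no coset of G consists only of odd characteristics. -/
open scoped BigOperators

namespace GoepelAux8

abbrev V (g : ℕ) := (Fin g → ZMod 2) × (Fin g → ZMod 2)

def q {g : ℕ} (x : V g) : ZMod 2 := ∑ i, x.1 i * x.2 i

lemma zmod2_cases : ∀ a : ZMod 2, a = 0 ∨ a = 1 := by decide

lemma z_ne : ∀ a : ZMod 2, a ≠ 0 → a = 1 := by decide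
lemma z_att : ∀ a t : ZMod 2, a + t + t = a := by decide
lemma z_key1 : ∀ v a b : ZMod 2, v + a + b = v → b = a := by decide
lemma z_key2 : ∀ a b : ZMod 2, a + b = 0 → b = a := by decide
lemma z_key3 : ∀ a b c : ZMod 2, 0 = a + b + c → b + c = a := by decide
lemma z_key4 : ∀ a b c : ZMod 2, b + c = a → a + b + c = 0 := by decide
lemma z_zero_ne_one : ¬(0 : ZMod 2) = 1 := by decide

def B {g : ℕ} : V g →ₗ[ZMod 2] V g →ₗ[ZMod 2] ZMod 2 :=
  LinearMap.mk₂ (ZMod 2)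
    (fun x y => (∑ i, x.1 i * y.2 i) + (∑ i, x.2 i * y.1 i))
    (fun x x' y => by
      simp only [Prod.fst_add, Prod.snd_add, Pi.add_apply, add_mul, Finset.sum_add_distrib]
      ring)
    (fun c x y => by rcases zmod2_cases c with rfl | rfl <;> simp)
    (fun x y y' => by
      simp only [Prod.fst_add, Prod.snd_add, Pi.add_apply, mul_add, Finset.sum_add_distrib]
      ring)
    (fun c x y => by rcases zmod2_cases c with rfl | rfl <;> simp)

@[simp] lemma B_apply {g : ℕ} (x y : V g) :
    B x y = (∑ i, x.1 i * y.2 i) + (∑ i, x.2 i * y.1 i) := rfl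

lemma q_add {g : ℕ} (x y : V g) : q (x + y) = q x + q y + B x y := by
  have h : ∀ u v : Fin g → ZMod 2, ∑ i, u i * v i = ∑ i, v i * u i :=
    fun u v => Finset.sum_congr rfl fun i _ => mul_comm _ _
  simp only [q, B_apply, Prod.fst_add, Prod.snd_add, Pi.add_apply, add_mul, mul_add,
    Finset.sum_add_distrib]
  rw [h y.1 x.2]
  ring

lemma sum_single {g : ℕ} (u : Fin g → ZMod 2) (j : Fin g) :
    ∑ i, u i * (Pi.single j 1 : Fin g → ZMod 2) i = u j := by
  simp [Pi.single_apply, mul_ite]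

lemma B_injective {g : ℕ} : Function.Injective (B (g := g)) := by
  rw [← LinearMap.ker_eq_bot, LinearMap.ker_eq_bot']
  intro x hx
  have h1 : ∀ j, x.1 j = 0 := fun j => by
    have := congrArg (fun f => f ((0 : Fin g → ZMod 2), Pi.single j (1 : ZMod 2))) hx
    simpa [sum_single] using this
  have h2 : ∀ j, x.2 j = 0 := fun j => by
    have := congrArg (fun f => f (Pi.single j (1 : ZMod 2), (0 : Fin g → ZMod 2))) hx
    simpa [sum_single] using this
  ext j
  · exact h1 j
  · exact h2 j

/-- Key counting lemma: a ℤ/2-valued additive map hitting 1 has fibers of half size. -/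
lemma two_mul_card_fiber {W : Type*} [AddCommGroup W] [Fintype W] [DecidableEq W]
    (f : W → ZMod 2) (hadd : ∀ x y, f (x + y) = f x + f y)
    (w₁ : W) (h1 : f w₁ = 1) (v : ZMod 2) :
    2 * (Finset.univ.filter fun w => f w = v).card = Fintype.card W := by
  classical
  have hz : ∀ a b : ZMod 2, a + b = 1 → b = 1 → a = 0 := by decide
  have key : (Finset.univ.filter fun w => f w = 0).card
      = (Finset.univ.filter fun w => f w = 1).card := by
    refine Finset.card_nbij' (fun w => w + w₁) (fun w => w - w₁) ?_ ?_ ?_ ?_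
    · intro w hw
      simp only [Finset.mem_coe, Finset.mem_filter, Finset.mem_univ, true_and] at hw ⊢
      rw [hadd, hw, h1, zero_add]
    · intro w hw
      simp only [Finset.mem_coe, Finset.mem_filter, Finset.mem_univ, true_and] at hw ⊢
      have := hadd (w - w₁) w₁
      rw [sub_add_cancel, hw] at this
      exact hz _ _ this.symm h1
    · intro a _; exact add_sub_cancel_right a w₁
    · intro a _; exact sub_add_cancel a w₁
  have hsplit : (Finset.univ.filter fun w => f w = 0).card
      + (Finset.univ.filter fun w => f w = 1).card = Fintype.card W := by
    rw [← Finset.card_univ]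
    conv_rhs => rw [← Finset.card_filter_add_card_filter_not
      (s := (Finset.univ : Finset W)) (p := fun w => f w = 0)]
    congr 1
    apply congrArg
    apply Finset.filter_congr
    intro w _
    rcases zmod2_cases (f w) with h | h <;> simp [h]
  rcases zmod2_cases v with rfl | rfl <;> omega


lemma card_fun2 (g : ℕ) : Fintype.card (Fin g → ZMod 2) = 2 ^ g := by
  simp

lemma two_mul_card_even (g : ℕ) :
    2 * (Finset.univ.filter fun x : V g => q x = 0).card = 2 ^ (2 * g) + 2 ^ g := by
  classical
  rw [Finset.card_eq_sum_card_fiberwise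
    (f := Prod.fst) (t := (Finset.univ : Finset (Fin g → ZMod 2)))
    (fun x _ => Finset.mem_univ _), Finset.mul_sum]
  have per : ∀ a : Fin g → ZMod 2,
      2 * ((Finset.univ.filter fun x : V g => q x = 0).filter fun x => x.1 = a).card
        = 2 ^ g + (if a = 0 then 2 ^ g else 0) := by
    intro a
    have hbij : ((Finset.univ.filter fun x : V g => q x = 0).filter fun x => x.1 = a).card
        = (Finset.univ.filter fun b : Fin g → ZMod 2 => (∑ i, a i * b i) = 0).card := by
      refine Finset.card_nbij' (fun x => x.2) (fun b => (a, b)) ?_ ?_ ?_ ?_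
      · intro x hx
        simp only [Finset.mem_coe, Finset.mem_filter, Finset.mem_univ, true_and] at hx ⊢
        rw [← hx.2]
        exact hx.1
      · intro b hb
        simp only [Finset.mem_coe, Finset.mem_filter, Finset.mem_univ, true_and] at hb ⊢
        exact ⟨hb, trivial⟩
      · intro x hx
        simp only [Finset.mem_coe, Finset.mem_filter, Finset.mem_univ, true_and] at hx
        rw [← hx.2]
      · intro b _
        rfl
    rw [hbij]
    by_cases ha : a = 0
    · subst ha
      rw [if_pos rfl]
      have hall : (Finset.univ.filter
          fun b : Fin g → ZMod 2 => (∑ i, (0 : Fin g → ZMod 2) i * b i) = 0) = Finset.univ := by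
        apply Finset.filter_true_of_mem
        intro b _
        simp
      rw [hall, Finset.card_univ, card_fun2]
      ring
    · rw [if_neg ha]
      obtain ⟨j, hj⟩ : ∃ j, a j ≠ 0 := by
        by_contra h
        push_neg at h
        exact ha (funext h)
      have haj : a j = 1 := by
        rcases zmod2_cases (a j) with h | h
        · exact absurd h hj
        · exact h
      have hkey := two_mul_card_fiber (W := Fin g → ZMod 2) (fun b => ∑ i, a i * b i)
        (fun x y => by
          simp only [Pi.add_apply, mul_add, Finset.sum_add_distrib])
        (Pi.single j 1) (by simpa [sum_single a j] using haj) 0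
      simpa [card_fun2] using hkey
  rw [Finset.sum_congr rfl fun a _ => per a, Finset.sum_add_distrib, Finset.sum_const,
    Finset.card_univ, card_fun2, smul_eq_mul,
    Finset.sum_ite_eq' Finset.univ (0 : Fin g → ZMod 2) fun _ => 2 ^ g,
    if_pos (Finset.mem_univ _), two_mul, pow_add]

end GoepelAux8

namespace GoepelAux8

variable {g : ℕ}

set_option maxHeartbeats 1000000 in
lemma main_setup (g : ℕ) (hg : 1 ≤ g)
    (G : Submodule (ZMod 2) (V g))
    (hrank : Module.finrank (ZMod 2) G = g)
    (hisot : ∀ x ∈ G, ∀ y ∈ G,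
      (∑ i, x.1 i * y.2 i) + (∑ i, x.2 i * y.1 i) = 0) :
    ∃ x₀ : V g, q x₀ = 0 ∧
      (∀ y : V g, Submodule.Quotient.mk y = (Submodule.Quotient.mk x₀ : V g ⧸ G) → q y = 0) ∧
      (∀ (x : V g) (v : ZMod 2),
        (∀ y : V g, Submodule.Quotient.mk y = (Submodule.Quotient.mk x : V g ⧸ G) → q y = v) →
        (Submodule.Quotient.mk x : V g ⧸ G) = Submodule.Quotient.mk x₀ ∧ q x = v) := by
  classical
  haveI : Fact (Nat.Prime 2) := ⟨Nat.prime_two⟩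
  have finV : Module.finrank (ZMod 2) (V g) = 2 * g := by
    rw [Module.finrank_prod, Module.finrank_fin_fun]; omega
  set ψ : V g →ₗ[ZMod 2] Module.Dual (ZMod 2) G := (G.subtype.dualMap).comp B with hψdef
  have hψ_apply : ∀ (x : V g) (h : G), ψ x h = B x h.1 := fun x h => rfl
  have hBsurj : Function.Surjective (B (g := g)) := by
    rw [← LinearMap.injective_iff_surjective_of_finrank_eq_finrank
      (Subspace.dual_finrank_eq (V := V g)).symm]
    exact B_injective
  have hψsurj : Function.Surjective ψ :=
    (LinearMap.dualMap_surjective_of_injective G.injective_subtype).comp hBsurj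
  have hBG : ∀ x ∈ G, ∀ y ∈ G, B x y = 0 := fun x hx y hy => by
    rw [B_apply]; exact hisot x hx y hy
  have hqadd : ∀ x ∈ G, ∀ y ∈ G, q (x + y) = q x + q y := fun x hx y hy => by
    rw [q_add, hBG x hx y hy, add_zero]
  set φ : Module.Dual (ZMod 2) G :=
    { toFun := fun h => q h.1
      map_add' := fun h h' => hqadd h.1 h.2 h'.1 h'.2
      map_smul' := fun c h => by
        rcases zmod2_cases c with rfl | rfl
        · have : ((0 : ZMod 2) • h : G) = 0 := by simp
          rw [this]
          simp [q]
        · simp } with hφdef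
  obtain ⟨x₀, hx₀⟩ := hψsurj φ
  have hx₀' : ∀ h ∈ G, B x₀ h = q h := fun h hh => LinearMap.congr_fun hx₀ ⟨h, hh⟩
  have hker : LinearMap.ker ψ = G := by
    have hle : G ≤ LinearMap.ker ψ := fun x hx => by
      rw [LinearMap.mem_ker]
      ext h
      exact hBG x hx h.1 h.2
    have h1 := LinearMap.finrank_range_add_finrank_ker ψ
    rw [LinearMap.range_eq_top.mpr hψsurj, finrank_top, Subspace.dual_finrank_eq, hrank,
      finV] at h1
    exact (Submodule.eq_of_le_of_finrank_le hle (by rw [hrank]; omega)).symm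
  have convA : ∀ y : V g,
      Submodule.Quotient.mk y = (Submodule.Quotient.mk x₀ : V g ⧸ G) → q y = q x₀ := by
    intro y hy
    rw [Submodule.Quotient.eq] at hy
    have e : y = x₀ + (y - x₀) := by abel
    rw [e, q_add, hx₀' _ hy]
    exact z_att _ _
  have claimA : ∀ (x : V g) (v : ZMod 2),
      (∀ y : V g, Submodule.Quotient.mk y = (Submodule.Quotient.mk x : V g ⧸ G) → q y = v) →
      (Submodule.Quotient.mk x : V g ⧸ G) = Submodule.Quotient.mk x₀ ∧ q x = v := by
    intro x v hx
    have hqx : q x = v := hx x rfl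
    have hB : ∀ h ∈ G, B x h = q h := by
      intro h hh
      have h1 : Submodule.Quotient.mk (x + h) = (Submodule.Quotient.mk x : V g ⧸ G) := by
        rw [Submodule.Quotient.eq]
        simpa using hh
      have h2 := hx _ h1
      rw [q_add, hqx] at h2
      exact z_key1 v (q h) (B x h) h2
    have hψ0 : ψ (x - x₀) = 0 := by
      rw [map_sub, hx₀, sub_eq_zero]
      ext h
      exact hB h.1 h.2
    have hmem : x - x₀ ∈ G := hker ▸ LinearMap.mem_ker.mpr hψ0
    exact ⟨(Submodule.Quotient.eq G).mpr hmem, hqx⟩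
  -- now prove q x₀ = 0 by counting
  have hqx₀ : q x₀ = 0 := by
    by_contra hne
    have hodd : q x₀ = 1 := z_ne _ hne
    letI : Fintype (V g ⧸ G) := Fintype.ofFinite _
    have hcardQ : Fintype.card (V g ⧸ G) = 2 ^ g := by
      have h3 := Submodule.finrank_quotient_add_finrank G
      rw [hrank, finV] at h3
      rw [Module.card_eq_pow_finrank (K := ZMod 2) (V := V g ⧸ G), ZMod.card]
      congr 1
      omega
    have hcardG : Fintype.card G = 2 ^ g := by
      rw [Module.card_eq_pow_finrank (K := ZMod 2) (V := G), ZMod.card, hrank]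
    have hdec := Finset.card_eq_sum_card_fiberwise
      (s := Finset.univ.filter fun x : V g => q x = 0)
      (t := (Finset.univ : Finset (V g ⧸ G)))
      (f := fun x => (Submodule.Quotient.mk x : V g ⧸ G)) (fun x _ => Finset.mem_univ _)
    have per : ∀ c : V g ⧸ G,
        2 * ((Finset.univ.filter fun x : V g => q x = 0).filter
            fun x => (Submodule.Quotient.mk x : V g ⧸ G) = c).card
          = if c = Submodule.Quotient.mk x₀ then 0 else 2 ^ g := by
      intro c
      obtain ⟨xc, rfl⟩ := Submodule.Quotient.mk_surjective G c
      by_cases hc : (Submodule.Quotient.mk xc : V g ⧸ G) = Submodule.Quotient.mk x₀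
      · rw [if_pos hc]
        have hempty : ((Finset.univ.filter fun x : V g => q x = 0).filter
            fun x => (Submodule.Quotient.mk x : V g ⧸ G) = Submodule.Quotient.mk xc) = ∅ := by
          apply Finset.eq_empty_of_forall_notMem
          intro x hx
          simp only [Finset.mem_filter, Finset.mem_univ, true_and] at hx
          have h4 := convA x (hx.2.trans hc)
          rw [hx.1, hodd] at h4
          exact absurd h4 z_zero_ne_one
        rw [hempty]
        simp
      · rw [if_neg hc]
        set f : G → ZMod 2 := fun h => q h.1 + B xc h.1 with hf
        have hfadd : ∀ h h' : G, f (h + h') = f h + f h' := by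
          intro h h'
          have e1 : ((h + h' : G) : V g) = h.1 + h'.1 := rfl
          simp only [hf, e1, q_add, map_add, hBG h.1 h.2 h'.1 h'.2]
          ring
        have hex : ∃ h : G, f h = 1 := by
          by_contra hno
          push_neg at hno
          apply hc
          have hBq : ψ xc = φ := by
            ext h
            have hn := hno h
            have h0 : f h = 0 := by
              rcases zmod2_cases (f h) with h' | h'
              · exact h'
              · exact absurd h' hn
            exact z_key2 (q h.1) (B xc h.1) h0
          have hψ0 : ψ (xc - x₀) = 0 := by
            rw [map_sub, hx₀, sub_eq_zero, hBq]
          exact (Submodule.Quotient.eq G).mpr (hker ▸ LinearMap.mem_ker.mpr hψ0)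
        obtain ⟨w₁, hw₁⟩ := hex
        have hbij : ((Finset.univ.filter fun x : V g => q x = 0).filter
            fun x => (Submodule.Quotient.mk x : V g ⧸ G) = Submodule.Quotient.mk xc).card
            = (Finset.univ.filter fun h : G => f h = q xc).card := by
          refine Finset.card_bij'
            (fun x hx => ⟨x - xc, by
              simp only [Finset.mem_filter, Finset.mem_univ, true_and] at hx
              exact (Submodule.Quotient.eq G).mp hx.2⟩)
            (fun h _ => xc + h.1) ?_ ?_ ?_ ?_
          · intro x hx
            simp only [Finset.mem_filter, Finset.mem_univ, true_and] at hx ⊢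
            have e : xc + (x - xc) = x := by abel
            have hq := q_add xc (x - xc)
            rw [e, hx.1] at hq
            exact z_key3 _ _ _ hq
          · intro h hh
            simp only [Finset.mem_filter, Finset.mem_univ, true_and] at hh ⊢
            constructor
            · rw [q_add]
              exact z_key4 _ _ _ hh
            · rw [Submodule.Quotient.eq]
              simp [h.2]
          · intro x hx
            simp only
            abel
          · intro h hh
            apply Subtype.ext
            simp only
            abel
        have hmain := two_mul_card_fiber (W := G) f hfadd w₁ hw₁ (q xc)
        rw [hbij, hmain, hcardG]
    have h1 : (2 ^ g - 1) * 2 ^ g + 2 ^ g = 2 ^ g * 2 ^ g := by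
      rw [Nat.sub_mul, one_mul, Nat.sub_add_cancel (Nat.le_mul_of_pos_left _ (by positivity))]
    have hsum : 2 * (Finset.univ.filter fun x : V g => q x = 0).card
        = (2 ^ g - 1) * 2 ^ g := by
      rw [hdec, Finset.mul_sum, Finset.sum_congr rfl fun c _ => per c,
        ← Finset.sum_erase_add _ _ (Finset.mem_univ (Submodule.Quotient.mk x₀ : V g ⧸ G)),
        if_pos rfl, add_zero,
        Finset.sum_congr rfl fun c hc => if_neg (Finset.ne_of_mem_erase hc),
        Finset.sum_const, smul_eq_mul, Finset.card_erase_of_mem (Finset.mem_univ _),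
        Finset.card_univ, hcardQ]
    have htot := two_mul_card_even g
    rw [hsum, two_mul, pow_add] at htot
    have hN : 2 ≤ 2 ^ g := by
      calc 2 = 2 ^ 1 := (pow_one 2).symm
      _ ≤ 2 ^ g := Nat.pow_le_pow_right (by norm_num) hg
    have lin : ∀ A B N : ℕ, 2 ≤ N → A + N = B → A = B + N → False := by
      intro A B N h1 h2 h3
      omega
    exact lin _ _ _ hN h1 htot
  exact ⟨x₀, hqx₀, fun y hy => (convA y hy).trans hqx₀, claimA⟩

end GoepelAux8

open GoepelAux8 in
/-- let `G` be a Göpel group of order `2^g` in `V = 𝔽₂^g × 𝔽₂^g`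
(a maximal, `g`-dimensional, totally isotropic subspace). Then exactly one coset of
`G` in `V` consists only of even characteristics, and no coset of `G` consists only of
odd characteristics. -/
theorem goepel_systems_maximal_case (g : ℕ) (hg : 1 ≤ g)
    (G : Submodule (ZMod 2) ((Fin g → ZMod 2) × (Fin g → ZMod 2)))
    (hrank : Module.finrank (ZMod 2) G = g)
    (hisot : ∀ x ∈ G, ∀ y ∈ G,
      (∑ i, x.1 i * y.2 i) + (∑ i, x.2 i * y.1 i) = 0) :
    Nat.card {c : ((Fin g → ZMod 2) × (Fin g → ZMod 2)) ⧸ G //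
        ∀ x : (Fin g → ZMod 2) × (Fin g → ZMod 2),
          Submodule.Quotient.mk x = c → ∑ i, x.1 i * x.2 i = 0} = 1 ∧
    Nat.card {c : ((Fin g → ZMod 2) × (Fin g → ZMod 2)) ⧸ G //
        ∀ x : (Fin g → ZMod 2) × (Fin g → ZMod 2),
          Submodule.Quotient.mk x = c → ∑ i, x.1 i * x.2 i = 1} = 0 := by
  obtain ⟨x₀, hq0, hconv, hclaim⟩ := GoepelAux8.main_setup g hg G hrank hisot
  constructor
  · rw [Nat.card_eq_one_iff_unique]
    constructor
    · refine ⟨fun a b => ?_⟩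
      apply Subtype.ext
      obtain ⟨ca, ha⟩ := a
      obtain ⟨cb, hb⟩ := b
      obtain ⟨xa, rfl⟩ := Submodule.Quotient.mk_surjective G ca
      obtain ⟨xb, rfl⟩ := Submodule.Quotient.mk_surjective G cb
      have h1 := (hclaim xa 0 ha).1
      have h2 := (hclaim xb 0 hb).1
      show Submodule.Quotient.mk xa = Submodule.Quotient.mk xb
      rw [h1]
      exact h2.symm
    · exact ⟨⟨Submodule.Quotient.mk x₀, fun x hx => hconv x hx⟩⟩
  · have hempty : IsEmpty {c : ((Fin g → ZMod 2) × (Fin g → ZMod 2)) ⧸ G //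
        ∀ x : (Fin g → ZMod 2) × (Fin g → ZMod 2),
          Submodule.Quotient.mk x = c → ∑ i, x.1 i * x.2 i = 1} := by
      refine ⟨fun c => ?_⟩
      obtain ⟨c, hc⟩ := c
      obtain ⟨x, rfl⟩ := Submodule.Quotient.mk_surjective G c
      have h1 := hclaim x 1 hc
      have h2 := hconv x h1.1
      rw [h1.2] at h2
      exact z_zero_ne_one h2.symm
    exact Nat.card_of_isEmpty
end

section
/- Let τ ∈ 𝔥₂ and write θ₁,…,θ₁₀ for the ten even genus-2 theta constants. Then the following six identities hold: θ₅²θ₆² = θ₁²θ₄² − θ₂²θ₃²; θ₅⁴ + θ₆⁴ = θ₁⁴ − θ₂⁴ − θ₃⁴ + θ₄⁴; θ₇²θ₉² = θ₁²θ₃² − θ₂²θ₄²; θ₇⁴ + θ₉⁴ = θ₁⁴ − θ₂⁴ + θ₃⁴ − θ₄⁴; θ₈²θ₁₀² = θ₁²θ₂² − θ₃²θ₄²; θ₈⁴ + θ₁₀⁴ = θ₁⁴ + θ₂⁴ − θ₃⁴ − θ₄⁴. -/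
open scoped BigOperators

/-- The genus-2 theta constant with rational characteristics `a, b ∈ ℚ²`:
`θ[a;b](0,τ) = ∑_{u ∈ ℤ²} exp(πi((u+a)ᵀτ(u+a) + 2(u+a)ᵀb))`. -/
noncomputable def thetaNull2 (a b : Fin 2 → ℚ) (τ : Matrix (Fin 2) (Fin 2) ℂ) : ℂ :=
  ∑' u : Fin 2 → ℤ, Complex.exp ((Real.pi : ℂ) * Complex.I *
    ((∑ i, ∑ j, ((u i : ℂ) + (a i : ℂ)) * τ i j * ((u j : ℂ) + (a j : ℂ))) +
      2 * ∑ i, ((u i : ℂ) + (a i : ℂ)) * (b i : ℂ)))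

noncomputable def θ₁ (τ : Matrix (Fin 2) (Fin 2) ℂ) : ℂ :=
  thetaNull2 ![0, 0] ![0, 0] τ
noncomputable def θ₂ (τ : Matrix (Fin 2) (Fin 2) ℂ) : ℂ :=
  thetaNull2 ![0, 0] ![1/2, 1/2] τ
noncomputable def θ₃ (τ : Matrix (Fin 2) (Fin 2) ℂ) : ℂ :=
  thetaNull2 ![0, 0] ![1/2, 0] τ
noncomputable def θ₄ (τ : Matrix (Fin 2) (Fin 2) ℂ) : ℂ :=
  thetaNull2 ![0, 0] ![0, 1/2] τ
noncomputable def θ₅ (τ : Matrix (Fin 2) (Fin 2) ℂ) : ℂ :=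
  thetaNull2 ![1/2, 0] ![0, 0] τ
noncomputable def θ₆ (τ : Matrix (Fin 2) (Fin 2) ℂ) : ℂ :=
  thetaNull2 ![1/2, 0] ![0, 1/2] τ
noncomputable def θ₇ (τ : Matrix (Fin 2) (Fin 2) ℂ) : ℂ :=
  thetaNull2 ![0, 1/2] ![0, 0] τ
noncomputable def θ₈ (τ : Matrix (Fin 2) (Fin 2) ℂ) : ℂ :=
  thetaNull2 ![1/2, 1/2] ![0, 0] τ
noncomputable def θ₉ (τ : Matrix (Fin 2) (Fin 2) ℂ) : ℂ :=
  thetaNull2 ![0, 1/2] ![1/2, 0] τ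
noncomputable def θ₁₀ (τ : Matrix (Fin 2) (Fin 2) ℂ) : ℂ :=
  thetaNull2 ![1/2, 1/2] ![1/2, 1/2] τ

set_option maxHeartbeats 1000000

namespace ThetaGoepel

open Complex Real

noncomputable section

lemma summable_gauss1 {η : ℝ} (hη : 0 < η) (c : ℝ) :
    Summable fun n : ℤ => Real.exp (-(η * (n + c) ^ 2)) := by
  have h := summable_pow_mul_jacobiTheta₂_term_bound (η * |c| / π) (T := η / π)
    (by positivity) 0
  refine h.of_nonneg_of_le (fun n => (Real.exp_pos _).le) (fun n => ?_)
  rw [pow_zero, one_mul, Int.cast_abs]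
  apply Real.exp_le_exp.mpr
  have hπ := Real.pi_pos
  have heq : -π * (η / π * (n:ℝ) ^ 2 - 2 * (η * |c| / π) * |(n:ℝ)|)
      = -(η * (n:ℝ)^2) + η * (2 * |c| * |(n:ℝ)|) := by
    field_simp; ring
  rw [heq]
  have h2 : -((n:ℝ) * c) ≤ |(n:ℝ)| * |c| := by
    rw [← abs_mul]; exact neg_le_of_neg_le (by simpa using neg_abs_le ((n:ℝ)*c))
  nlinarith [sq_nonneg c, hη.le]

variable {τ : Matrix (Fin 2) (Fin 2) ℂ}

lemma quad_lower (hsym : τ.IsSymm) (hpos : (τ.map Complex.im).PosDef) :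
    ∃ δ > 0, ∀ x : Fin 2 → ℝ,
      δ * (x 0 ^ 2 + x 1 ^ 2) ≤ ∑ i, ∑ j, x i * (τ i j).im * x j := by
  set A := (τ 0 0).im
  set B := (τ 0 1).im
  set D := (τ 1 1).im
  have hB : (τ 1 0).im = B := by
    have := congrFun (congrFun hsym 0) 1
    rw [Matrix.transpose_apply] at this
    rw [this]
  have key : ∀ x : Fin 2 → ℝ, x ≠ 0 →
      0 < A * x 0 ^ 2 + 2 * B * x 0 * x 1 + D * x 1 ^ 2 := by
    intro x hx
    have h := hpos.dotProduct_mulVec_pos hx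
    simp only [dotProduct, Matrix.mulVec, Matrix.map_apply, Fin.sum_univ_two,
      dotProduct, star_trivial, Pi.star_apply] at h
    rw [hB] at h
    nlinarith [h]
  have hA : 0 < A := by
    have := key ![1, 0] (by intro h; have := congrFun h 0; simp at this)
    simpa using this
  have hD : 0 < D := by
    have := key ![0, 1] (by intro h; have := congrFun h 1; simp at this)
    simpa using this
  have hdet : 0 < A * D - B ^ 2 := by
    have := key ![D, -B] (by
      intro h; have := congrFun h 0; simp at this; exact absurd this hD.ne')
    simp at this
    nlinarith [this, hD]
  refine ⟨(A * D - B ^ 2) / (A + D), by positivity, fun x => ?_⟩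
  have hval : ∑ i, ∑ j, x i * (τ i j).im * x j
      = A * x 0 ^ 2 + 2 * B * x 0 * x 1 + D * x 1 ^ 2 := by
    simp [Fin.sum_univ_two, hB]; ring
  rw [hval, div_mul_eq_mul_div, div_le_iff₀ (by positivity)]
  nlinarith [sq_nonneg (A * x 0 + B * x 1), sq_nonneg (B * x 0 + D * x 1)]

lemma summable_gauss2 {δ : ℝ} (hδ : 0 < δ)
    (hq : ∀ x : Fin 2 → ℝ, δ * (x 0 ^ 2 + x 1 ^ 2) ≤ ∑ i, ∑ j, x i * (τ i j).im * x j)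
    {s e : ℝ} (hs : 0 < s) (he : 0 < e) (c : Fin 2 → ℝ) :
    Summable fun k : Fin 2 → ℤ =>
      Real.exp (-(s * ∑ i, ∑ j, (e * k i + c i) * (τ i j).im * (e * k j + c j))) := by
  set η := s * δ * e ^ 2 with hηdef
  have hη : 0 < η := by positivity
  have hprod : Summable fun p : ℤ × ℤ =>
      Real.exp (-(η * (p.1 + c 0 / e) ^ 2)) * Real.exp (-(η * (p.2 + c 1 / e) ^ 2)) :=
    Summable.mul_of_nonneg (summable_gauss1 hη _) (summable_gauss1 hη _)
      (fun _ => (Real.exp_pos _).le) (fun _ => (Real.exp_pos _).le)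
  have hG : Summable fun k : Fin 2 → ℤ =>
      Real.exp (-(η * (k 0 + c 0 / e) ^ 2)) * Real.exp (-(η * (k 1 + c 1 / e) ^ 2)) := by
    have := (piFinTwoEquiv (fun _ => ℤ)).summable_iff.mpr hprod
    exact this
  refine hG.of_nonneg_of_le (fun _ => (Real.exp_pos _).le) (fun k => ?_)
  rw [← Real.exp_add]
  apply Real.exp_le_exp.mpr
  have hx := hq (fun i => e * k i + c i)
  have h1 : η * ((k 0 : ℝ) + c 0 / e) ^ 2 = s * δ * (e * k 0 + c 0) ^ 2 := by
    field_simp [hηdef]; ring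
  have h2 : η * ((k 1 : ℝ) + c 1 / e) ^ 2 = s * δ * (e * k 1 + c 1) ^ 2 := by
    field_simp [hηdef]; ring
  nlinarith [hx, hs.le]

/-- the fundamental reindexing equivalence `(σ,k,l) ↦ (k+l+σ, k-l)` -/
def thE : ((Fin 2 → Fin 2) × ((Fin 2 → ℤ) × (Fin 2 → ℤ))) ≃ ((Fin 2 → ℤ) × (Fin 2 → ℤ)) where
  toFun w := (fun i => w.2.1 i + w.2.2 i + ((w.1 i : ℕ) : ℤ), fun i => w.2.1 i - w.2.2 i)
  invFun y := (fun i => ⟨((y.1 i + y.2 i) % 2).toNat, by omega⟩,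
    fun i => (y.1 i + y.2 i - (y.1 i + y.2 i) % 2) / 2,
    fun i => (y.1 i - y.2 i - (y.1 i + y.2 i) % 2) / 2)
  left_inv := by
    rintro ⟨σ, k, l⟩
    refine Prod.ext (funext fun i => ?_) (Prod.ext (funext fun i => ?_) (funext fun i => ?_)) <;>
      simp only <;>
      obtain hs := (σ i).is_lt
    · apply Fin.ext
      simp only [Fin.val_natCast]
      omega
    · omega
    · omega
  right_inv := by
    rintro ⟨u, v⟩
    refine Prod.ext (funext fun i => ?_) (funext fun i => ?_) <;> simp only <;> omega

variable (τ)

/-- term of theta series with characteristics `α/2, β/2` -/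
def fterm (α β : Fin 2 → ℤ) (u : Fin 2 → ℤ) : ℂ :=
  Complex.exp ((π : ℂ) * Complex.I *
    ((∑ i, ∑ j, ((u i : ℂ) + (α i : ℂ) / 2) * τ i j * ((u j : ℂ) + (α j : ℂ) / 2)) +
      2 * ∑ i, ((u i : ℂ) + (α i : ℂ) / 2) * ((β i : ℂ) / 2)))

/-- term of the second-order theta series -/
def gterm (ρ : Fin 2 → ℤ) (k : Fin 2 → ℤ) : ℂ :=
  Complex.exp ((π : ℂ) * Complex.I *
    ((∑ i, ∑ j, ((2 * k i + ρ i : ℤ) : ℂ) * τ i j * ((2 * k j + ρ j : ℤ) : ℂ)) / 2))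

/-- second-order theta constant -/
def sTheta (ρ : Fin 2 → ℤ) : ℂ := ∑' k : Fin 2 → ℤ, gterm τ ρ k

lemma neg_one_zpow_eq_exp (n : ℤ) : ((-1 : ℂ) ^ n) = Complex.exp ((π : ℂ) * Complex.I * n) := by
  rw [show ((π : ℂ) * Complex.I * n) = n * (π * Complex.I) by ring, Complex.exp_int_mul,
    Complex.exp_pi_mul_I]

lemma key_term (α β : Fin 2 → ℤ) (σ : Fin 2 → Fin 2) (k l : Fin 2 → ℤ) :
    fterm τ α β (fun i => k i + l i + ((σ i : ℕ) : ℤ)) * fterm τ α β (fun i => k i - l i)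
    = (-1 : ℂ) ^ (∑ i, (((σ i : ℕ) : ℤ) + α i) * β i) *
        gterm τ (fun i => ((σ i : ℕ) : ℤ) + α i) k * gterm τ (fun i => ((σ i : ℕ) : ℤ)) l := by
  rw [neg_one_zpow_eq_exp, fterm, fterm, gterm, gterm, ← Complex.exp_add, ← Complex.exp_add,
    ← Complex.exp_add, Complex.exp_eq_exp_iff_exists_int]
  refine ⟨∑ i, k i * β i, ?_⟩
  simp only [Fin.sum_univ_two]
  push_cast
  ring

lemma norm_exp_pi_I_mul (z : ℂ) :
    ‖Complex.exp ((π : ℂ) * Complex.I * z)‖ = Real.exp (-(π * z.im)) := by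
  rw [Complex.norm_exp]
  congr 1
  simp [Complex.mul_re, Complex.mul_im]

lemma im_quad (w : Fin 2 → ℝ) :
    (∑ i, ∑ j, ((w i : ℂ)) * τ i j * ((w j : ℂ))).im
      = ∑ i, ∑ j, w i * (τ i j).im * w j := by
  simp [Fin.sum_univ_two, Complex.add_im, Complex.mul_im, Complex.mul_re]

lemma norm_fterm (α β : Fin 2 → ℤ) (u : Fin 2 → ℤ) :
    ‖fterm τ α β u‖ = Real.exp (-(π * ∑ i, ∑ j,
      (1 * (u i : ℝ) + (α i : ℝ) / 2) * (τ i j).im * (1 * (u j : ℝ) + (α j : ℝ) / 2))) := by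
  rw [fterm, norm_exp_pi_I_mul]
  congr 2
  have h1 : ∀ i, ((u i : ℂ) + (α i : ℂ) / 2) = (((1 * (u i : ℝ) + (α i : ℝ) / 2) : ℝ) : ℂ) := by
    intro i; push_cast; ring
  simp only [h1]
  rw [Complex.add_im, im_quad]
  have h2 : (2 * ∑ i, (((1 * (u i : ℝ) + (α i : ℝ) / 2 : ℝ)) : ℂ) * ((β i : ℂ) / 2)).im = 0 := by
    simp [Fin.sum_univ_two, Complex.add_im, Complex.mul_im]
  rw [h2, add_zero]

lemma norm_gterm (ρ : Fin 2 → ℤ) (k : Fin 2 → ℤ) :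
    ‖gterm τ ρ k‖ = Real.exp (-(π / 2 * ∑ i, ∑ j,
      (2 * (k i : ℝ) + (ρ i : ℝ)) * (τ i j).im * (2 * (k j : ℝ) + (ρ j : ℝ)))) := by
  rw [gterm, norm_exp_pi_I_mul]
  congr 1
  have h1 : ∀ i, (((2 * k i + ρ i : ℤ)) : ℂ) = (((2 * (k i : ℝ) + (ρ i : ℝ)) : ℝ) : ℂ) := by
    intro i; push_cast; ring
  simp only [h1]
  rw [div_eq_mul_inv, show ((2 : ℂ))⁻¹ = (((2:ℝ)⁻¹ : ℝ) : ℂ) by norm_num]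
  rw [Complex.mul_im, Complex.ofReal_re, Complex.ofReal_im, im_quad]
  ring

lemma summable_norm_fterm {δ : ℝ} (hδ : 0 < δ)
    (hq : ∀ x : Fin 2 → ℝ, δ * (x 0 ^ 2 + x 1 ^ 2) ≤ ∑ i, ∑ j, x i * (τ i j).im * x j)
    (α β : Fin 2 → ℤ) : Summable fun u : Fin 2 → ℤ => ‖fterm τ α β u‖ :=
  (summable_gauss2 hδ hq Real.pi_pos one_pos (fun i => (α i : ℝ) / 2)).congr
    (fun u => (norm_fterm τ α β u).symm)

lemma summable_norm_gterm {δ : ℝ} (hδ : 0 < δ)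
    (hq : ∀ x : Fin 2 → ℝ, δ * (x 0 ^ 2 + x 1 ^ 2) ≤ ∑ i, ∑ j, x i * (τ i j).im * x j)
    (ρ : Fin 2 → ℤ) : Summable fun k : Fin 2 → ℤ => ‖gterm τ ρ k‖ :=
  (summable_gauss2 hδ hq (by positivity : (0:ℝ) < π / 2) two_pos (fun i => (ρ i : ℝ))).congr
    (fun k => (norm_gterm τ ρ k).symm)

lemma theta_sq (hsym : τ.IsSymm) (hpos : (τ.map Complex.im).PosDef) (α β : Fin 2 → ℤ) :
    (∑' u : Fin 2 → ℤ, fterm τ α β u) ^ 2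
      = ∑ σ : Fin 2 → Fin 2, (-1 : ℂ) ^ (∑ i, (((σ i : ℕ) : ℤ) + α i) * β i) *
          sTheta τ (fun i => ((σ i : ℕ) : ℤ) + α i) * sTheta τ (fun i => ((σ i : ℕ) : ℤ)) := by
  obtain ⟨δ, hδ, hq⟩ := quad_lower hsym hpos
  have hf := summable_norm_fterm τ hδ hq α β
  have hg := fun ρ => summable_norm_gterm τ hδ hq ρ
  rw [sq, tsum_mul_tsum_of_summable_norm hf hf]
  have hsum : Summable fun z : (Fin 2 → ℤ) × (Fin 2 → ℤ) =>
      fterm τ α β z.1 * fterm τ α β z.2 := summable_mul_of_summable_norm hf hf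
  rw [← Equiv.tsum_eq thE (fun z => fterm τ α β z.1 * fterm τ α β z.2)]
  have hkey : ∀ w : (Fin 2 → Fin 2) × ((Fin 2 → ℤ) × (Fin 2 → ℤ)),
      fterm τ α β (thE w).1 * fterm τ α β (thE w).2
        = (-1 : ℂ) ^ (∑ i, (((w.1 i : ℕ) : ℤ) + α i) * β i) *
            gterm τ (fun i => ((w.1 i : ℕ) : ℤ) + α i) w.2.1 *
            gterm τ (fun i => ((w.1 i : ℕ) : ℤ)) w.2.2 := by
    rintro ⟨σ, k, l⟩
    exact key_term τ α β σ k l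
  rw [tsum_congr hkey]
  have hinner : ∀ σ : Fin 2 → Fin 2, Summable fun p : (Fin 2 → ℤ) × (Fin 2 → ℤ) =>
      (-1 : ℂ) ^ (∑ i, (((σ i : ℕ) : ℤ) + α i) * β i) *
        gterm τ (fun i => ((σ i : ℕ) : ℤ) + α i) p.1 * gterm τ (fun i => ((σ i : ℕ) : ℤ)) p.2 :=
    fun σ => ((summable_mul_of_summable_norm (hg _) (hg _)).mul_left _).congr
      (fun p => by ring)
  have hsum2 : Summable fun w : (Fin 2 → Fin 2) × ((Fin 2 → ℤ) × (Fin 2 → ℤ)) =>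
      (-1 : ℂ) ^ (∑ i, (((w.1 i : ℕ) : ℤ) + α i) * β i) *
        gterm τ (fun i => ((w.1 i : ℕ) : ℤ) + α i) w.2.1 *
        gterm τ (fun i => ((w.1 i : ℕ) : ℤ)) w.2.2 :=
    (thE.summable_iff.mpr hsum).congr hkey
  rw [Summable.tsum_prod' hsum2 (fun σ => hinner σ), tsum_fintype]
  refine Finset.sum_congr rfl (fun σ _ => ?_)
  have hfac : ∀ p : (Fin 2 → ℤ) × (Fin 2 → ℤ),
      (-1 : ℂ) ^ (∑ i, (((σ i : ℕ) : ℤ) + α i) * β i) *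
        gterm τ (fun i => ((σ i : ℕ) : ℤ) + α i) p.1 * gterm τ (fun i => ((σ i : ℕ) : ℤ)) p.2
      = (-1 : ℂ) ^ (∑ i, (((σ i : ℕ) : ℤ) + α i) * β i) *
        (gterm τ (fun i => ((σ i : ℕ) : ℤ) + α i) p.1 * gterm τ (fun i => ((σ i : ℕ) : ℤ)) p.2) :=
    fun p => by ring
  rw [tsum_congr (fun p => hfac p), tsum_mul_left, sTheta, sTheta, mul_assoc,
    tsum_mul_tsum_of_summable_norm (hg _) (hg _)]

lemma thetaNull2_eq (α β : Fin 2 → ℤ) (a b : Fin 2 → ℚ)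
    (ha : ∀ i, ((a i : ℚ) : ℂ) = (α i : ℂ) / 2) (hb : ∀ i, ((b i : ℚ) : ℂ) = (β i : ℂ) / 2) :
    thetaNull2 a b τ = ∑' u, fterm τ α β u := by
  apply tsum_congr
  intro u
  unfold fterm
  congr 1
  simp only [ha, hb]

lemma sTheta_shift (ρ δv : Fin 2 → ℤ) : sTheta τ (fun i => ρ i + 2 * δv i) = sTheta τ ρ := by
  unfold sTheta
  rw [← (Equiv.addRight δv).tsum_eq (fun k => gterm τ ρ k)]
  apply tsum_congr
  intro k
  simp only [gterm, Equiv.coe_addRight, Pi.add_apply]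
  congr 1
  simp only [Fin.sum_univ_two]
  push_cast
  ring

lemma sum_pi_fin_two {M : Type*} [AddCommMonoid M] (F : (Fin 2 → Fin 2) → M) :
    ∑ σ : Fin 2 → Fin 2, F σ = F ![0, 0] + F ![0, 1] + F ![1, 0] + F ![1, 1] := by
  have huniv : (Finset.univ : Finset (Fin 2 → Fin 2))
      = {![0, 0], ![0, 1], ![1, 0], ![1, 1]} := by decide
  rw [huniv, Finset.sum_insert (by decide), Finset.sum_insert (by decide),
    Finset.sum_insert (by decide), Finset.sum_singleton]
  abel

lemma vec_norm0 (v : Fin 2 → Fin 2) :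
    (fun i => ((v i : ℕ) : ℤ)) = ![((v 0 : ℕ) : ℤ), ((v 1 : ℕ) : ℤ)] := by
  funext i; fin_cases i <;> simp

lemma vec_norm (v : Fin 2 → Fin 2) (w : Fin 2 → ℤ) :
    (fun i => ((v i : ℕ) : ℤ) + w i) = ![((v 0 : ℕ) : ℤ) + w 0, ((v 1 : ℕ) : ℤ) + w 1] := by
  funext i; fin_cases i <;> simp

lemma sh20 : sTheta τ ![2, 0] = sTheta τ ![0, 0] := by
  rw [← sTheta_shift τ ![0,0] ![1,0]]; congr 1; funext i; fin_cases i <;> simp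
lemma sh02 : sTheta τ ![0, 2] = sTheta τ ![0, 0] := by
  rw [← sTheta_shift τ ![0,0] ![0,1]]; congr 1; funext i; fin_cases i <;> simp
lemma sh21 : sTheta τ ![2, 1] = sTheta τ ![0, 1] := by
  rw [← sTheta_shift τ ![0,1] ![1,0]]; congr 1; funext i; fin_cases i <;> simp
lemma sh12 : sTheta τ ![1, 2] = sTheta τ ![1, 0] := by
  rw [← sTheta_shift τ ![1,0] ![0,1]]; congr 1; funext i; fin_cases i <;> simp
lemma sh22 : sTheta τ ![2, 2] = sTheta τ ![0, 0] := by
  rw [← sTheta_shift τ ![0,0] ![1,1]]; congr 1; funext i; fin_cases i <;> simp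

end

end ThetaGoepel

open ThetaGoepel

/-- the six theta-constant identities arising from the first Göpel group,
expressing `θ₅,…,θ₁₀` in terms of the fundamental theta constants `θ₁, θ₂, θ₃, θ₄`. -/
theorem theta_identities_goepel_i (τ : Matrix (Fin 2) (Fin 2) ℂ)
    (hsym : τ.IsSymm) (hpos : (τ.map Complex.im).PosDef) :
    θ₅ τ ^ 2 * θ₆ τ ^ 2 = θ₁ τ ^ 2 * θ₄ τ ^ 2 - θ₂ τ ^ 2 * θ₃ τ ^ 2 ∧
    θ₅ τ ^ 4 + θ₆ τ ^ 4 = θ₁ τ ^ 4 - θ₂ τ ^ 4 - θ₃ τ ^ 4 + θ₄ τ ^ 4 ∧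
    θ₇ τ ^ 2 * θ₉ τ ^ 2 = θ₁ τ ^ 2 * θ₃ τ ^ 2 - θ₂ τ ^ 2 * θ₄ τ ^ 2 ∧
    θ₇ τ ^ 4 + θ₉ τ ^ 4 = θ₁ τ ^ 4 - θ₂ τ ^ 4 + θ₃ τ ^ 4 - θ₄ τ ^ 4 ∧
    θ₈ τ ^ 2 * θ₁₀ τ ^ 2 = θ₁ τ ^ 2 * θ₂ τ ^ 2 - θ₃ τ ^ 2 * θ₄ τ ^ 2 ∧
    θ₈ τ ^ 4 + θ₁₀ τ ^ 4 = θ₁ τ ^ 4 + θ₂ τ ^ 4 - θ₃ τ ^ 4 - θ₄ τ ^ 4 := by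
  set P := sTheta τ ![0, 0] with hP
  set Q := sTheta τ ![0, 1] with hQ
  set R := sTheta τ ![1, 0] with hR
  set S := sTheta τ ![1, 1] with hS
  have h1 : θ₁ τ ^ 2 = P * P + Q * Q + R * R + S * S := by
    rw [θ₁, thetaNull2_eq τ ![0,0] ![0,0] _ _ (by intro i; fin_cases i <;> norm_num)
      (by intro i; fin_cases i <;> norm_num), theta_sq τ hsym hpos, sum_pi_fin_two]
    norm_num [Fin.sum_univ_two, vec_norm, vec_norm0, sh20, sh02, sh21, sh12, sh22,
      ← hP, ← hQ, ← hR, ← hS]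
    try ring1
  have h2 : θ₂ τ ^ 2 = P * P - Q * Q - R * R + S * S := by
    rw [θ₂, thetaNull2_eq τ ![0,0] ![1,1] _ _ (by intro i; fin_cases i <;> norm_num)
      (by intro i; fin_cases i <;> norm_num), theta_sq τ hsym hpos, sum_pi_fin_two]
    norm_num [Fin.sum_univ_two, vec_norm, vec_norm0, sh20, sh02, sh21, sh12, sh22,
      ← hP, ← hQ, ← hR, ← hS]
    try ring1
  have h3 : θ₃ τ ^ 2 = P * P + Q * Q - R * R - S * S := by
    rw [θ₃, thetaNull2_eq τ ![0,0] ![1,0] _ _ (by intro i; fin_cases i <;> norm_num)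
      (by intro i; fin_cases i <;> norm_num), theta_sq τ hsym hpos, sum_pi_fin_two]
    norm_num [Fin.sum_univ_two, vec_norm, vec_norm0, sh20, sh02, sh21, sh12, sh22,
      ← hP, ← hQ, ← hR, ← hS]
    try ring1
  have h4 : θ₄ τ ^ 2 = P * P - Q * Q + R * R - S * S := by
    rw [θ₄, thetaNull2_eq τ ![0,0] ![0,1] _ _ (by intro i; fin_cases i <;> norm_num)
      (by intro i; fin_cases i <;> norm_num), theta_sq τ hsym hpos, sum_pi_fin_two]
    norm_num [Fin.sum_univ_two, vec_norm, vec_norm0, sh20, sh02, sh21, sh12, sh22,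
      ← hP, ← hQ, ← hR, ← hS]
    try ring1
  have h5 : θ₅ τ ^ 2 = 2 * (P * R + Q * S) := by
    rw [θ₅, thetaNull2_eq τ ![1,0] ![0,0] _ _ (by intro i; fin_cases i <;> norm_num)
      (by intro i; fin_cases i <;> norm_num), theta_sq τ hsym hpos, sum_pi_fin_two]
    norm_num [Fin.sum_univ_two, vec_norm, vec_norm0, sh20, sh02, sh21, sh12, sh22,
      ← hP, ← hQ, ← hR, ← hS]
    try ring1
  have h6 : θ₆ τ ^ 2 = 2 * (P * R - Q * S) := by
    rw [θ₆, thetaNull2_eq τ ![1,0] ![0,1] _ _ (by intro i; fin_cases i <;> norm_num)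
      (by intro i; fin_cases i <;> norm_num), theta_sq τ hsym hpos, sum_pi_fin_two]
    norm_num [Fin.sum_univ_two, vec_norm, vec_norm0, sh20, sh02, sh21, sh12, sh22,
      ← hP, ← hQ, ← hR, ← hS]
    try ring1
  have h7 : θ₇ τ ^ 2 = 2 * (P * Q + R * S) := by
    rw [θ₇, thetaNull2_eq τ ![0,1] ![0,0] _ _ (by intro i; fin_cases i <;> norm_num)
      (by intro i; fin_cases i <;> norm_num), theta_sq τ hsym hpos, sum_pi_fin_two]
    norm_num [Fin.sum_univ_two, vec_norm, vec_norm0, sh20, sh02, sh21, sh12, sh22,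
      ← hP, ← hQ, ← hR, ← hS]
    try ring1
  have h9 : θ₉ τ ^ 2 = 2 * (P * Q - R * S) := by
    rw [θ₉, thetaNull2_eq τ ![0,1] ![1,0] _ _ (by intro i; fin_cases i <;> norm_num)
      (by intro i; fin_cases i <;> norm_num), theta_sq τ hsym hpos, sum_pi_fin_two]
    norm_num [Fin.sum_univ_two, vec_norm, vec_norm0, sh20, sh02, sh21, sh12, sh22,
      ← hP, ← hQ, ← hR, ← hS]
    try ring1
  have h8 : θ₈ τ ^ 2 = 2 * (P * S + Q * R) := by
    rw [θ₈, thetaNull2_eq τ ![1,1] ![0,0] _ _ (by intro i; fin_cases i <;> norm_num)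
      (by intro i; fin_cases i <;> norm_num), theta_sq τ hsym hpos, sum_pi_fin_two]
    norm_num [Fin.sum_univ_two, vec_norm, vec_norm0, sh20, sh02, sh21, sh12, sh22,
      ← hP, ← hQ, ← hR, ← hS]
    try ring1
  have h10 : θ₁₀ τ ^ 2 = 2 * (P * S - Q * R) := by
    rw [θ₁₀, thetaNull2_eq τ ![1,1] ![1,1] _ _ (by intro i; fin_cases i <;> norm_num)
      (by intro i; fin_cases i <;> norm_num), theta_sq τ hsym hpos, sum_pi_fin_two]
    norm_num [Fin.sum_univ_two, vec_norm, vec_norm0, sh20, sh02, sh21, sh12, sh22,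
      ← hP, ← hQ, ← hR, ← hS]
    try ring1
  have e4 : ∀ z : ℂ, z ^ 4 = (z ^ 2) ^ 2 := fun z => by ring
  refine ⟨?_, ?_, ?_, ?_, ?_, ?_⟩ <;>
    simp only [e4, h1, h2, h3, h4, h5, h6, h7, h8, h9, h10] <;> ring
end
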